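/- Let R be a right noetherian ring with right Krull dimension α, let T be a right weakly ideal invariant ideal with |R/T|_r = α, and let M be a finitely generated right R-module of Krull dimension α. If H is an essential submodule of M that is α-Krull-homogeneous with HT = 0 and |M/H|_r < α, then MT = 0. -/

import Mathlib

/-
Fix `x ∈ M` and let `L = {r | x r ∈ H}`. Then `R/L` embeds in `M/H`, so `|R/L| < α`, and weak
ideal invariance gives `|T/LT| < α`. Since `x L T ⊆ H T = 0`, the submodule `xT` is a quotient of
`T/LT`, hence has dimension `< α`. But a nonzero submodule of `M` meets the essential submodule
`H`, whose nonzero submodules all have dimension `α`; so `xT = 0`.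
-/

universe u

/-- Gabriel–Rentschler deviation: `M` has Krull dimension `≤ α`: every descending chain of
submodules has all but finitely many factors of Krull dimension `< α`. -/
def KdimLE (R : Type u) [Ring R] (α : Ordinal.{u}) (M : Type u)
    [AddCommGroup M] [Module R M] : Prop :=
  ∀ f : ℕ → Submodule R M, (∀ n, f (n + 1) ≤ f n) →
    ∃ N : ℕ, ∀ n ≥ N, f n = f (n + 1) ∨
      ∃ β : {γ : Ordinal.{u} // γ < α},
        KdimLE R β.1 (↥(f n) ⧸ (f (n + 1)).comap (f n).subtype)
termination_by α
decreasing_by exact β.2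

open Classical in
/-- The Gabriel–Rentschler Krull dimension of a module (`⊥` for the zero module).
For a right module take `R := Sᵐᵒᵖ`. -/
noncomputable def kdim (R : Type u) [Ring R] (M : Type u)
    [AddCommGroup M] [Module R M] : WithBot Ordinal.{u} :=
  if Subsingleton M then ⊥ else ↑(sInf {α : Ordinal.{u} | KdimLE R α M})

/-- `M` is a Krull-homogeneous `R`-module of Krull dimension `α`:
every nonzero submodule has Krull dimension `α`. -/
def IsKrullHomogeneous (R : Type u) [Ring R] (M : Type u) [AddCommGroup M]
    [Module R M] (α : WithBot Ordinal.{u}) : Prop :=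
  ∀ N : Submodule R M, N ≠ ⊥ → kdim R ↥N = α

namespace TwoSidedIdeal

/-- The underlying right ideal of a two-sided ideal. -/
def rightIdeal {R : Type u} [Ring R] (P : TwoSidedIdeal R) :
    Submodule Rᵐᵒᵖ R where
  carrier := P
  add_mem' := P.add_mem
  zero_mem' := P.zero_mem
  smul_mem' := fun _ _ hx => P.mul_mem_right _ _ hx

/-- A two-sided ideal `P` is prime: `P ≠ R` and `aRb ⊆ P` implies `a ∈ P` or `b ∈ P`. -/
def IsPrime {R : Type u} [Ring R] (P : TwoSidedIdeal R) : Prop :=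
  P ≠ ⊤ ∧ ∀ a b : R, (∀ r : R, a * r * b ∈ P) → a ∈ P ∨ b ∈ P

/-- A two-sided ideal `P` is semiprime: `aRa ⊆ P` implies `a ∈ P`. -/
def IsSemiprime {R : Type u} [Ring R] (P : TwoSidedIdeal R) : Prop :=
  ∀ a : R, (∀ r : R, a * r * a ∈ P) → a ∈ P

/-- A minimal prime of `R`. -/
def IsMinimalPrime {R : Type u} [Ring R] (P : TwoSidedIdeal R) : Prop :=
  P.IsPrime ∧ ∀ Q : TwoSidedIdeal R, Q.IsPrime → Q ≤ P → Q = P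

/-- `I ^ n = 0`, phrased as: every product of `n` elements of `I` vanishes. -/
def PowEqZero {R : Type u} [Ring R] (I : TwoSidedIdeal R) (n : ℕ) : Prop :=
  ∀ f : Fin n → R, (∀ i, f i ∈ I) → (List.ofFn f).prod = 0

end TwoSidedIdeal

/-- The right ideal `L·T` generated by products `l * t`, `l ∈ L`, `t ∈ T`. -/
def mulSpan {R : Type u} [Ring R] (L : Submodule Rᵐᵒᵖ R) (T : TwoSidedIdeal R) :
    Submodule Rᵐᵒᵖ R :=
  Submodule.span Rᵐᵒᵖ {x : R | ∃ l ∈ L, ∃ t ∈ T, x = l * t}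

/-- `c` is regular modulo `P`: its image in `R/P` is neither a left nor a right
zero divisor. -/
def IsRegularMod {R : Type u} [Ring R] (P : TwoSidedIdeal R) (c : R) : Prop :=
  ∀ x : R, (c * x ∈ P → x ∈ P) ∧ (x * c ∈ P → x ∈ P)

open Submodule

section KrullDimension

variable {R : Type u} [Ring R]

theorem Submodule.mapQ_injective_of_comap_eq {A B : Type*} [AddCommGroup A] [Module R A]
    [AddCommGroup B] [Module R B] {a : Submodule R A} {b : Submodule R B} (g : A →ₗ[R] B)
    (h : b.comap g = a) : Function.Injective (a.mapQ b g h.ge) := by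
  rw [← LinearMap.ker_eq_bot, ker_mapQ, h, mkQ_map_self]

theorem Submodule.mapQ_surjective_of_surjective {A B : Type*} [AddCommGroup A] [Module R A]
    [AddCommGroup B] [Module R B] {a : Submodule R A} {b : Submodule R B} {g : A →ₗ[R] B}
    (hg : Function.Surjective g) (h : a ≤ b.comap g) : Function.Surjective (a.mapQ b g h) := by
  intro z
  obtain ⟨y, rfl⟩ := b.mkQ_surjective z
  obtain ⟨x, rfl⟩ := hg y
  exact ⟨Submodule.Quotient.mk x, rfl⟩

variable {M N : Type u} [AddCommGroup M] [Module R M] [AddCommGroup N] [Module R N]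

theorem KdimLE.mono {α β : Ordinal.{u}} (h : KdimLE R α M) (hαβ : α ≤ β) : KdimLE R β M := by
  rw [KdimLE] at h ⊢
  intro f hf
  obtain ⟨K, hK⟩ := h f hf
  exact ⟨K, fun n hn => (hK n hn).imp_right fun ⟨δ, hδ⟩ => ⟨⟨δ.1, δ.2.trans_le hαβ⟩, hδ⟩⟩

theorem kdimLE_of_injective (α : Ordinal.{u}) : ∀ {M N : Type u} [AddCommGroup M] [Module R M]
    [AddCommGroup N] [Module R N] (f : N →ₗ[R] M), Function.Injective f →
    KdimLE R α M → KdimLE R α N := by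
  induction α using WellFoundedLT.induction with
  | _ α IH =>
  intro M N _ _ _ _ f hf hM
  rw [KdimLE] at hM ⊢
  intro g hg
  obtain ⟨K, hK⟩ := hM (fun n => (g n).map f) (fun n => map_mono (hg n))
  refine ⟨K, fun n hn => (hK n hn).imp (fun h => map_injective_of_injective hf h) fun ⟨β, hβ⟩ =>
    ⟨β, IH β.1 β.2 _ (mapQ_injective_of_comap_eq (f.submoduleMap (g n)) ?_) hβ⟩⟩
  ext x
  simp [hf.eq_iff]

theorem kdimLE_of_surjective (α : Ordinal.{u}) (f : M →ₗ[R] N) (hf : Function.Surjective f)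
    (hM : KdimLE R α M) : KdimLE R α N := by
  rw [KdimLE] at hM ⊢
  intro g hg
  obtain ⟨K, hK⟩ := hM (fun n => (g n).comap f) (fun n => comap_mono (hg n))
  refine ⟨K, fun n hn => (hK n hn).imp (fun h => comap_injective_of_surjective hf h)
    fun ⟨β, hβ⟩ => ⟨β, ?_⟩⟩
  let r : ↥((g n).comap f) →ₗ[R] ↥(g n) := f.restrict fun _ hx => hx
  have hr : Function.Surjective r := by
    rintro ⟨y, hy⟩
    obtain ⟨x, rfl⟩ := hf y
    exact ⟨⟨x, hy⟩, rfl⟩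
  have hc : ((g (n + 1)).comap (g n).subtype).comap r =
      ((g (n + 1)).comap f).comap ((g n).comap f).subtype := by
    ext
    rfl
  let e : (↥((g n).comap f) ⧸ ((g (n + 1)).comap f).comap ((g n).comap f).subtype) ≃ₗ[R]
      (↥(g n) ⧸ (g (n + 1)).comap (g n).subtype) :=
    LinearEquiv.ofBijective _
      ⟨mapQ_injective_of_comap_eq r hc, mapQ_surjective_of_surjective hr hc.ge⟩
  exact kdimLE_of_injective β.1 e.symm.toLinearMap e.symm.injective hβ

-- Once `f (n + 1) ≠ ⊥`, the factor `f n / f (n + 1)` embeds in the quotient `M ⧸ f (n + 1)`.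
theorem kdimLE_succ_of_forall_quotient {γ : Ordinal.{u}}
    (h : ∀ P : Submodule R M, P ≠ ⊥ → KdimLE R γ (M ⧸ P)) : KdimLE R (Order.succ γ) M := by
  rw [KdimLE]
  intro f hf
  rcases em (∃ n, f n = ⊥) with ⟨n₀, h₀⟩ | hb
  · have hanti := antitone_nat_of_succ_le hf
    refine ⟨n₀, fun n hn => Or.inl ?_⟩
    have hn' : f n ≤ f n₀ := hanti hn
    have hn'' : f (n + 1) ≤ f n₀ := hanti (hn.trans n.le_succ)
    rw [h₀, le_bot_iff] at hn' hn''
    rw [hn', hn'']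
  · exact ⟨0, fun n _ => Or.inr ⟨⟨γ, Order.lt_succ γ⟩, kdimLE_of_injective γ _
      (mapQ_injective_of_comap_eq (f n).subtype rfl) (h _ fun h => hb ⟨n + 1, h⟩)⟩⟩

theorem exists_kdimLE (M : Type u) [AddCommGroup M] [Module R M] [IsNoetherian R M] :
    ∃ α : Ordinal.{u}, KdimLE R α M := by
  suffices ∀ N : Submodule R M, ∃ α : Ordinal.{u}, KdimLE R α (M ⧸ N) by
    obtain ⟨α, hα⟩ := this ⊥
    exact ⟨α, kdimLE_of_surjective α (quotEquivOfEqBot ⊥ rfl).toLinearMap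
      (LinearEquiv.surjective _) hα⟩
  intro N
  induction N using WellFoundedGT.induction with
  | _ N IH =>
  choose γ hγ using fun N' : {N' // N < N'} => IH N'.1 N'.2
  refine ⟨Order.succ (⨆ N', γ N'), kdimLE_succ_of_forall_quotient fun P hP => ?_⟩
  have hN : N < P.comap N.mkQ := by
    refine lt_of_le_of_ne (fun x hx => by simp [(Quotient.mk_eq_zero N).2 hx]) fun h => hP ?_
    rw [← map_comap_eq_of_surjective N.mkQ_surjective P, ← h, mkQ_map_self]
  exact kdimLE_of_surjective _ _ (mapQ_surjective_of_surjective N.mkQ_surjective le_rfl)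
    ((hγ ⟨_, hN⟩).mono (Ordinal.le_iSup γ _))

-- `hM` is essential: a module without deviation has the junk `kdim` value `sInf ∅ = 0`.
theorem kdim_le_of_forall_kdimLE (hsub : Subsingleton M → Subsingleton N)
    (h : ∀ γ, KdimLE R γ M → KdimLE R γ N) (hM : ∃ γ : Ordinal.{u}, KdimLE R γ M) :
    kdim R N ≤ kdim R M := by
  classical
  by_cases hN : Subsingleton N
  · rw [kdim, if_pos hN]
    exact bot_le
  · rw [kdim, kdim, if_neg hN, if_neg (mt hsub hN)]
    exact WithBot.coe_le_coe.mpr (csInf_le_csInf (OrderBot.bddBelow _) hM h)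

theorem kdim_le_of_injective [IsNoetherian R M] (f : N →ₗ[R] M) (hf : Function.Injective f) :
    kdim R N ≤ kdim R M :=
  kdim_le_of_forall_kdimLE (fun _ => hf.subsingleton) (fun γ => kdimLE_of_injective γ f hf)
    (exists_kdimLE M)

theorem kdim_le_of_surjective [IsNoetherian R M] (f : M →ₗ[R] N) (hf : Function.Surjective f) :
    kdim R N ≤ kdim R M :=
  kdim_le_of_forall_kdimLE (fun _ => hf.subsingleton) (fun γ => kdimLE_of_surjective γ f hf)
    (exists_kdimLE M)

theorem kdim_quotient_comap_le [IsNoetherian R M] (ϕ : N →ₗ[R] M) (H : Submodule R M) :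
    kdim R (N ⧸ H.comap ϕ) ≤ kdim R (M ⧸ H) :=
  kdim_le_of_injective _ (mapQ_injective_of_comap_eq ϕ rfl)

theorem kdim_range_le_quotient [IsNoetherian R N] (ψ : N →ₗ[R] M) {p : Submodule R N}
    (hp : p ≤ LinearMap.ker ψ) : kdim R (LinearMap.range ψ) ≤ kdim R (N ⧸ p) :=
  kdim_le_of_surjective (p.liftQ ψ.rangeRestrict (by rwa [LinearMap.ker_rangeRestrict]))
    (by rw [← LinearMap.range_eq_top, range_liftQ, LinearMap.range_rangeRestrict])

theorem eq_bot_of_kdim_lt [IsNoetherian R M] {α : WithBot Ordinal.{u}} {H : Submodule R M}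
    (hess : ∀ N : Submodule R M, N ≠ ⊥ → H ⊓ N ≠ ⊥)
    (hhom : ∀ N : Submodule R M, N ≤ H → N ≠ ⊥ → kdim R ↥N = α) {K : Submodule R M}
    (hK : kdim R K < α) : K = ⊥ := by
  by_contra hK0
  have hHK : kdim R ↥(H ⊓ K) ≤ kdim R K :=
    kdim_le_of_injective (inclusion inf_le_right) (inclusion_injective _)
  exact (hhom _ inf_le_left (hess K hK0) ▸ hHK.trans_lt hK).false

end KrullDimension

section RightMultiplication

variable {R : Type u} [Ring R] {M : Type u} [AddCommGroup M] [Module Rᵐᵒᵖ M]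

def rightMulMap (x : M) : R →ₗ[Rᵐᵒᵖ] M where
  toFun r := MulOpposite.op r • x
  map_add' r s := by rw [MulOpposite.op_add, add_smul]
  map_smul' c r := mul_smul c (MulOpposite.op r) x

theorem mulSpan_comap_rightMulMap_le_ker {H : Submodule Rᵐᵒᵖ M} {T : TwoSidedIdeal R}
    (hHT : ∀ h ∈ H, ∀ t ∈ T, MulOpposite.op t • h = (0 : M)) (x : M) :
    mulSpan (H.comap (rightMulMap x)) T ≤ LinearMap.ker (rightMulMap x) := by
  rw [mulSpan, span_le]
  rintro _ ⟨l, hl, t, ht, rfl⟩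
  change MulOpposite.op (l * t) • x = 0
  rw [MulOpposite.op_mul, mul_smul]
  exact hHT _ hl t ht

end RightMultiplication

theorem stmt3_general {R : Type u} [Ring R] [IsNoetherian Rᵐᵒᵖ R]
    (α : WithBot Ordinal.{u})
    (T : TwoSidedIdeal R)
    (hwii : ∀ L : Submodule Rᵐᵒᵖ R, kdim Rᵐᵒᵖ (R ⧸ L) < α →
      kdim Rᵐᵒᵖ (↥T.rightIdeal ⧸ (mulSpan L T).comap T.rightIdeal.subtype) < α)
    (M : Type u) [AddCommGroup M] [Module Rᵐᵒᵖ M] [Module.Finite Rᵐᵒᵖ M]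
    (H : Submodule Rᵐᵒᵖ M)
    (hess : ∀ N : Submodule Rᵐᵒᵖ M, N ≠ ⊥ → H ⊓ N ≠ ⊥)
    (hhom : ∀ N : Submodule Rᵐᵒᵖ M, N ≤ H → N ≠ ⊥ → kdim Rᵐᵒᵖ ↥N = α)
    (hHT : ∀ h ∈ H, ∀ t ∈ T, (MulOpposite.op t) • h = (0 : M))
    (hMH : kdim Rᵐᵒᵖ (M ⧸ H) < α) :
    ∀ x : M, ∀ t ∈ T, (MulOpposite.op t) • x = (0 : M) := by
  have : IsNoetherianRing Rᵐᵒᵖ := isNoetherian_of_linearEquiv (MulOpposite.opLinearEquiv Rᵐᵒᵖ)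
  have : IsNoetherian Rᵐᵒᵖ M := isNoetherian_of_isNoetherianRing_of_finite Rᵐᵒᵖ M
  intro x t ht
  set L := H.comap (rightMulMap x)
  have hL : kdim Rᵐᵒᵖ (R ⧸ L) < α := (kdim_quotient_comap_le _ H).trans_lt hMH
  set ψ := (rightMulMap x).comp T.rightIdeal.subtype
  have hψ : (mulSpan L T).comap T.rightIdeal.subtype ≤ LinearMap.ker ψ := by
    rw [LinearMap.ker_comp]
    exact comap_mono (mulSpan_comap_rightMulMap_le_ker hHT x)
  have hxT : LinearMap.range ψ = ⊥ :=
    eq_bot_of_kdim_lt hess hhom ((kdim_range_le_quotient ψ hψ).trans_lt (hwii L hL))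
  exact (mem_bot _).1 (hxT ▸ LinearMap.mem_range_self ψ ⟨t, ht⟩)

/-- Lemma 2: if `T` is a right weakly ideal invariant ideal with `|R/T|ᵣ = α = |R|ᵣ`
and `M` is a finitely generated right module of dimension `α` with an essential
`α`-Krull-homogeneous submodule `H` such that `HT = 0` and `|M/H|ᵣ < α`, then `MT = 0`. -/
theorem stmt3 {R : Type u} [Ring R] [IsNoetherian Rᵐᵒᵖ R]
    (α : WithBot Ordinal.{u}) (hR : kdim Rᵐᵒᵖ R = α)
    (T : TwoSidedIdeal R) (hT : kdim Rᵐᵒᵖ (R ⧸ T.rightIdeal) = α)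
    (hwii : ∀ L : Submodule Rᵐᵒᵖ R, kdim Rᵐᵒᵖ (R ⧸ L) < α →
      kdim Rᵐᵒᵖ (↥T.rightIdeal ⧸ (mulSpan L T).comap T.rightIdeal.subtype) < α)
    (M : Type u) [AddCommGroup M] [Module Rᵐᵒᵖ M] [Module.Finite Rᵐᵒᵖ M]
    (hM : kdim Rᵐᵒᵖ M = α)
    (H : Submodule Rᵐᵒᵖ M)
    (hess : ∀ N : Submodule Rᵐᵒᵖ M, N ≠ ⊥ → H ⊓ N ≠ ⊥)
    (hhom : ∀ N : Submodule Rᵐᵒᵖ M, N ≤ H → N ≠ ⊥ → kdim Rᵐᵒᵖ ↥N = α)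
    (hHT : ∀ h ∈ H, ∀ t ∈ T, (MulOpposite.op t) • h = (0 : M))
    (hMH : kdim Rᵐᵒᵖ (M ⧸ H) < α) :
    ∀ x : M, ∀ t ∈ T, (MulOpposite.op t) • x = (0 : M) :=
  stmt3_general α T hwii M H hess hhom hHT hMH
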